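/- Let X be a complete CAT(0) (Hadamard) space and S : X → X a strongly quasi-nonexpansive, orbital Δ-demiclosed mapping with Fix(S) ≠ ∅. Then for any p₀ ∈ X the Picard iterates xₙ := Sⁿ(p₀) Δ-converge to some point p* ∈ Fix(S). -/

import Mathlib

/-!
Quasi-nonexpansiveness makes the orbit `xₙ = Sⁿ p₀` Fejér monotone with respect to `Fix S`:
it is bounded and `d(xₙ, q)` converges for every fixed point `q`. Strong quasi-nonexpansiveness
then gives asymptotic regularity `d(xₙ, S xₙ) → 0`, so by orbital Δ-demiclosedness every Δ-limit
of a subsequence of the orbit is a fixed point.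

In a Hadamard space the CN inequality passes to the squared asymptotic radius `r(y)²`, which makes
minimising sequences of `r` Cauchy; hence bounded sequences have asymptotic centers, and a diagonal
argument producing regular subsequences shows that every bounded sequence has a Δ-convergent
subsequence. Since distances to fixed points converge along the orbit, the asymptotic radius at a
fixed point is the same for the orbit and for all its subsequences. So every subsequence has a
fixed asymptotic center (a Δ-limit of one of its subsequences), and comparing the fixed centers of
the orbit and of a subsequence through these common radii shows that the center of the orbit is a
center of every subsequence.
-/open Filter Metric

variable {X : Type*} [MetricSpace X]

/-- Fixed point set of a self-map. -/
def FixSet (S : X → X) : Set X := {x | S x = x}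

/-- Quasi-nonexpansive: nonempty fixed point set and `dist (S x) q ≤ dist x q`
for every `x` and every fixed point `q`. -/
def QuasiNonexpansive (S : X → X) : Prop :=
  (FixSet S).Nonempty ∧ ∀ x q, q ∈ FixSet S → dist (S x) q ≤ dist x q

/-- Strongly quasi-nonexpansive. -/
def StronglyQuasiNonexpansive (S : X → X) : Prop :=
  QuasiNonexpansive S ∧
    ∀ x : ℕ → X, Bornology.IsBounded (Set.range x) →
      ∀ q ∈ FixSet S,
        Tendsto (fun n => dist (x n) q - dist (S (x n)) q) atTop (nhds 0) →
        Tendsto (fun n => dist (x n) (S (x n))) atTop (nhds 0)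

/-- Complete CAT(0) (Hadamard) space: complete and every pair of points has a
midpoint satisfying the CN (comparison) inequality. -/
def IsHadamard (X : Type*) [MetricSpace X] : Prop :=
  CompleteSpace X ∧
    ∀ x y : X, ∃ m : X, dist x m = dist x y / 2 ∧ dist y m = dist x y / 2 ∧
      ∀ z : X, dist z m ^ 2 ≤ (dist z x ^ 2 + dist z y ^ 2) / 2 - dist x y ^ 2 / 4

/-- `z` is an asymptotic center of the bounded sequence `x`. -/
def AsympCenter (x : ℕ → X) (z : X) : Prop :=
  ∀ y : X, limsup (fun n => dist z (x n)) atTop ≤ limsup (fun n => dist y (x n)) atTop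

/-- Δ-convergence: `x` is bounded and `z` is an asymptotic center of every
subsequence of `x`. -/
def DeltaConv (x : ℕ → X) (z : X) : Prop :=
  Bornology.IsBounded (Set.range x) ∧
    ∀ φ : ℕ → ℕ, StrictMono φ → AsympCenter (x ∘ φ) z

/-- Δ-demiclosed mapping. -/
def DeltaDemiclosed (S : X → X) : Prop :=
  ∀ (x : ℕ → X) (z : X), DeltaConv x z →
    Tendsto (fun n => dist (x n) (S (x n))) atTop (nhds 0) → z ∈ FixSet S

/-- Orbital Δ-demiclosed mapping. -/
def OrbitalDeltaDemiclosed (S : X → X) : Prop :=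
  ∀ (x : ℕ → X) (z : X),
    (∃ (x0 : X) (φ : ℕ → ℕ), StrictMono φ ∧ ∀ n, x n = S^[φ n] x0) →
    DeltaConv x z →
    Tendsto (fun n => dist (x n) (S (x n))) atTop (nhds 0) → z ∈ FixSet S

/-- Composition `S (k-1) ∘ ⋯ ∘ S 0` of the first `k` mappings. -/
def compUpTo (S : ℕ → X → X) : ℕ → X → X
  | 0 => id
  | k + 1 => S k ∘ compUpTo S k

/-- A geodesically convex subset of a uniquely geodesic space: contains every
metric between-point of any two of its points. -/
def GConvex (C : Set X) : Prop :=
  ∀ x ∈ C, ∀ y ∈ C, ∀ z : X, dist x z + dist z y = dist x y → z ∈ C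

/-- Geodesic convexity of an extended-real-valued function. -/
def GConvexFun (f : X → EReal) : Prop :=
  ∀ x y z : X, ∀ t : ℝ, t ∈ Set.Icc (0 : ℝ) 1 →
    dist x z = t * dist x y → dist z y = (1 - t) * dist x y →
    f z ≤ ((1 - t : ℝ) : EReal) * f x + ((t : ℝ) : EReal) * f y

/-- Set of global minimizers. -/
def argminSet (f : X → EReal) : Set X := {x | ∀ y, f x ≤ f y}

/-- `R` is the resolvent of `f` with parameter `lam`. -/
def IsResolvent (f : X → EReal) (lam : ℝ) (R : X → X) : Prop :=
  ∀ x y : X,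
    f (R x) + (((dist x (R x)) ^ 2 / (2 * lam) : ℝ) : EReal) ≤
      f y + (((dist x y) ^ 2 / (2 * lam) : ℝ) : EReal)

open Topology

lemma limsup_le_add_div_two_sub {a b c : ℕ → ℝ} {k : ℝ}
    (hc : IsCoboundedUnder (· ≤ ·) atTop c) (ha : IsBoundedUnder (· ≤ ·) atTop a)
    (hb : IsBoundedUnder (· ≤ ·) atTop b) (h : ∀ n, c n ≤ (a n + b n) / 2 - k) :
    limsup c atTop ≤ (limsup a atTop + limsup b atTop) / 2 - k := by
  refine le_of_forall_pos_le_add fun ε hε => limsup_le_of_le hc ?_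
  filter_upwards [eventually_lt_of_limsup_lt (lt_add_of_pos_right _ hε) ha,
    eventually_lt_of_limsup_lt (lt_add_of_pos_right _ hε) hb] with n han hbn
  linarith [h n]

theorem StrictMono.exists_strictMono_comp_eq {α β γ : Type*} [Preorder α] [Preorder β]
    [LinearOrder γ] {f : α → β} {g : γ → β} (hf : StrictMono f) (hg : StrictMono g)
    (hfg : ∀ a, f a ∈ Set.range g) : ∃ τ : α → γ, StrictMono τ ∧ f = g ∘ τ := by
  choose τ hτ using hfg
  refine ⟨τ, fun a b hab => hg.lt_iff_lt.1 ?_, funext fun a => (hτ a).symm⟩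
  simpa only [hτ] using hf hab

/-- Existence of regular subsequences, for an abstract radius functional: `R σ` plays the role
of the asymptotic radius of `u ∘ σ`. -/
theorem exists_strictMono_forall_comp_eq (R : (ℕ → ℕ) → ℝ) (hR : BddBelow (Set.range R))
    (hcomp : ∀ σ τ, StrictMono τ → R (σ ∘ τ) ≤ R σ)
    (hshift : ∀ σ k, R (fun n => σ (n + k)) = R σ) :
    ∃ φ, StrictMono φ ∧ ∀ π, StrictMono π → R (φ ∘ π) = R φ := by
  set ρ : (ℕ → ℕ) → ℝ := fun σ => sInf ((fun τ => R (σ ∘ τ)) '' {τ | StrictMono τ})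
  have hρ_le : ∀ σ τ, StrictMono τ → ρ σ ≤ R (σ ∘ τ) := fun σ τ hτ =>
    csInf_le (hR.mono (Set.image_subset_iff.2 fun τ _ => Set.mem_range_self _)) ⟨τ, hτ, rfl⟩
  have hnear : ∀ σ (k : ℕ), ∃ τ, StrictMono τ ∧ R (σ ∘ τ) < ρ σ + 1 / (k + 1) := by
    intro σ k
    have hne : {τ : ℕ → ℕ | StrictMono τ}.Nonempty := ⟨id, strictMono_id⟩
    obtain ⟨_, ⟨τ, hτ, rfl⟩, h⟩ := Real.lt_sInf_add_pos (hne.image _) Nat.one_div_pos_of_nat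
    exact ⟨τ, hτ, h⟩
  choose T hT hTR using hnear
  -- `g (k + 1)` is a subsequence of `g k` almost realising the infimum `ρ (g k)`
  let g : ℕ → ℕ → ℕ := fun k =>
    Nat.rec (motive := fun _ => ℕ → ℕ) id (fun k gk => gk ∘ T gk k) k
  have hg_succ : ∀ k, g (k + 1) = g k ∘ T (g k) k := fun k => rfl
  have hg : ∀ k, StrictMono (g k) := by
    intro k
    induction k with
    | zero => exact strictMono_id
    | succ k ih => exact ih.comp (hT _ _)
  have hg_range : Antitone fun k => Set.range (g k) := antitone_nat_of_succ_le fun k => by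
    rw [hg_succ]; exact Set.range_comp_subset_range _ _
  let d : ℕ → ℕ := fun n => g n n
  have hd : StrictMono d := strictMono_nat_of_lt_succ fun n => calc
    g n n < g n (n + 1) := hg n n.lt_succ_self
    _ ≤ g n (T (g n) n (n + 1)) := (hg n).monotone (hT _ _).le_apply
  have htail : ∀ π, StrictMono π → ∀ k, ∃ τ, StrictMono τ ∧ (fun n => d (π (n + k))) = g k ∘ τ :=
    fun π hπ k => (hd.comp (hπ.comp (add_left_strictMono (a := k)))).exists_strictMono_comp_eq
      (hg k) fun n => hg_range ((Nat.le_add_left k n).trans hπ.le_apply) ⟨_, rfl⟩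
  have hlower : ∀ π, StrictMono π → ∀ k, ρ (g k) ≤ R (d ∘ π) := by
    intro π hπ k
    obtain ⟨τ, hτ, hτeq⟩ := htail π hπ k
    calc ρ (g k) ≤ R (g k ∘ τ) := hρ_le _ _ hτ
      _ = R (d ∘ π) := by rw [← hτeq]; exact hshift (d ∘ π) k
  have hupper : ∀ k : ℕ, R d ≤ ρ (g k) + 1 / (k + 1) := by
    intro k
    obtain ⟨τ, hτ, hτeq⟩ := htail id strictMono_id (k + 1)
    calc R d = R (g (k + 1) ∘ τ) := by rw [← hτeq]; exact (hshift d (k + 1)).symm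
      _ ≤ R (g (k + 1)) := hcomp _ _ hτ
      _ ≤ ρ (g k) + 1 / (k + 1) := (hTR _ _).le
  refine ⟨d, hd, fun π hπ => le_antisymm (hcomp _ _ hπ) ?_⟩
  have hlim : Tendsto (fun k : ℕ => R (d ∘ π) + 1 / (k + 1)) atTop (𝓝 (R (d ∘ π))) := by
    simpa using
      (tendsto_const_nhds (x := R (d ∘ π))).add tendsto_one_div_add_atTop_nhds_zero_nat
  exact ge_of_tendsto' hlim fun k => (hupper k).trans (add_le_add_left (hlower π hπ k) _)

noncomputable def asympRadiusAt (u : ℕ → X) (y : X) : ℝ :=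
  limsup (fun n => dist y (u n)) atTop

noncomputable def asympRadius (u : ℕ → X) : ℝ :=
  ⨅ y, asympRadiusAt u y

section AsympRadius

variable {u : ℕ → X}

lemma isBoundedUnder_dist (hu : Bornology.IsBounded (Set.range u)) (y : X) :
    IsBoundedUnder (· ≤ ·) atTop fun n => dist y (u n) := by
  obtain ⟨r, hr⟩ := (isBounded_iff_subset_closedBall y).1 hu
  exact isBoundedUnder_of ⟨r, fun n => by simpa [dist_comm] using hr (Set.mem_range_self n)⟩

lemma isBoundedUnder_dist_sq (hu : Bornology.IsBounded (Set.range u)) (y : X) :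
    IsBoundedUnder (· ≤ ·) atTop fun n => dist y (u n) ^ 2 := by
  obtain ⟨r, hr⟩ := (isBounded_iff_subset_closedBall y).1 hu
  refine isBoundedUnder_of ⟨r ^ 2, fun n => pow_le_pow_left₀ dist_nonneg ?_ 2⟩
  simpa [dist_comm] using hr (Set.mem_range_self n)

lemma asympRadiusAt_nonneg (hu : Bornology.IsBounded (Set.range u)) (y : X) :
    0 ≤ asympRadiusAt u y :=
  le_limsup_of_frequently_le (Frequently.of_forall fun _ => dist_nonneg)
    (isBoundedUnder_dist hu y)

lemma asympRadiusAt_le_dist_add (hu : Bornology.IsBounded (Set.range u)) (y z : X) :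
    asympRadiusAt u y ≤ dist y z + asympRadiusAt u z := by
  calc asympRadiusAt u y ≤ limsup (fun n => dist y z + dist z (u n)) atTop :=
        limsup_le_limsup (Eventually.of_forall fun _ => dist_triangle _ _ _)
          (isCoboundedUnder_le_of_le atTop fun _ => dist_nonneg)
          (isBoundedUnder_le_add isBoundedUnder_const (isBoundedUnder_dist hu z))
    _ = dist y z + asympRadiusAt u z :=
        limsup_const_add atTop _ _ (isBoundedUnder_dist hu z)
          (isCoboundedUnder_le_of_le atTop fun _ => dist_nonneg)

lemma asympRadiusAt_comp_le (hu : Bornology.IsBounded (Set.range u)) {φ : ℕ → ℕ}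
    (hφ : StrictMono φ) (y : X) : asympRadiusAt (u ∘ φ) y ≤ asympRadiusAt u y :=
  hφ.tendsto_atTop.limsup_comp_le_limsup (u := fun n => dist y (u n))
    (isCoboundedUnder_le_of_le _ fun _ => dist_nonneg) (isBoundedUnder_dist hu y)

lemma asympRadiusAt_add_nat (k : ℕ) (y : X) :
    asympRadiusAt (fun n => u (n + k)) y = asympRadiusAt u y :=
  limsup_nat_add (fun n => dist y (u n)) k

lemma asympRadiusAt_comp_eq_of_tendsto {φ : ℕ → ℕ} (hφ : Tendsto φ atTop atTop) {q : X}
    {L : ℝ} (h : Tendsto (fun n => dist (u n) q) atTop (𝓝 L)) :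
    asympRadiusAt (u ∘ φ) q = asympRadiusAt u q := by
  have h' := h.congr fun _ => dist_comm _ _
  exact (h'.comp hφ).limsup_eq.trans h'.limsup_eq.symm

lemma asympRadiusAt_sq (hu : Bornology.IsBounded (Set.range u)) (y : X) :
    asympRadiusAt u y ^ 2 = limsup (fun n => dist y (u n) ^ 2) atTop := by
  -- `t ↦ max t 0 ^ 2` is monotone on all of `ℝ` and agrees with squaring on distances
  have hmono : Monotone fun t : ℝ => max t 0 ^ 2 := fun s t hst =>
    pow_le_pow_left₀ (le_max_right s 0) (max_le_max_right 0 hst) 2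
  have key := hmono.map_limsup_of_continuousAt (F := atTop) (fun n => dist y (u n))
    (by fun_prop) (isBoundedUnder_dist hu y)
    (isCoboundedUnder_le_of_le atTop fun _ => dist_nonneg)
  rw [← max_eq_left (asympRadiusAt_nonneg hu y), asympRadiusAt, key]
  simp only [Function.comp_def, max_eq_left dist_nonneg]

lemma asympRadiusAt_sq_le_of_cn (hu : Bornology.IsBounded (Set.range u)) {y z m : X}
    (hm : ∀ w, dist w m ^ 2 ≤ (dist w y ^ 2 + dist w z ^ 2) / 2 - dist y z ^ 2 / 4) :
    asympRadiusAt u m ^ 2 ≤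
      (asympRadiusAt u y ^ 2 + asympRadiusAt u z ^ 2) / 2 - dist y z ^ 2 / 4 := by
  rw [asympRadiusAt_sq hu, asympRadiusAt_sq hu, asympRadiusAt_sq hu]
  exact limsup_le_add_div_two_sub (isCoboundedUnder_le_of_le atTop fun _ => sq_nonneg _)
    (isBoundedUnder_dist_sq hu y) (isBoundedUnder_dist_sq hu z)
    fun n => by simpa only [dist_comm (u n)] using hm (u n)

lemma asympRadius_le (hu : Bornology.IsBounded (Set.range u)) (y : X) :
    asympRadius u ≤ asympRadiusAt u y :=
  ciInf_le ⟨0, by rintro _ ⟨y, rfl⟩; exact asympRadiusAt_nonneg hu y⟩ y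

lemma asympRadius_nonneg (hu : Bornology.IsBounded (Set.range u)) : 0 ≤ asympRadius u :=
  haveI : Nonempty X := ⟨u 0⟩
  le_ciInf (asympRadiusAt_nonneg hu)

lemma asympRadius_comp_le (hu : Bornology.IsBounded (Set.range u)) {φ : ℕ → ℕ}
    (hφ : StrictMono φ) : asympRadius (u ∘ φ) ≤ asympRadius u :=
  haveI : Nonempty X := ⟨u 0⟩
  le_ciInf fun y => (asympRadius_le (hu.subset (Set.range_comp_subset_range φ u)) y).trans
    (asympRadiusAt_comp_le hu hφ y)

lemma asympRadius_add_nat (k : ℕ) : asympRadius (fun n => u (n + k)) = asympRadius u := by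
  simp only [asympRadius, asympRadiusAt_add_nat]

lemma AsympCenter.asympRadiusAt_le {c : X} (hc : AsympCenter u c) :
    asympRadiusAt u c ≤ asympRadius u :=
  haveI : Nonempty X := ⟨c⟩
  le_ciInf hc

/-- By the CN inequality at the midpoint `m` of `y k` and `y l`, the squared distance
`d(y k, y l)²` is at most `2 (r(y k)² - r²) + 2 (r(y l)² - r²)`. -/
lemma cauchySeq_of_tendsto_asympRadius (hX : IsHadamard X)
    (hu : Bornology.IsBounded (Set.range u)) {y : ℕ → X}
    (hy : Tendsto (fun k => asympRadiusAt u (y k)) atTop (𝓝 (asympRadius u))) :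
    CauchySeq y := by
  set r := asympRadius u
  have hmid : ∀ k l, dist (y k) (y l) ^ 2 ≤
      2 * (asympRadiusAt u (y k) ^ 2 - r ^ 2) + 2 * (asympRadiusAt u (y l) ^ 2 - r ^ 2) := by
    intro k l
    obtain ⟨m, -, -, hm⟩ := hX.2 (y k) (y l)
    have hcn := asympRadiusAt_sq_le_of_cn hu hm
    have hr : r ^ 2 ≤ asympRadiusAt u m ^ 2 :=
      pow_le_pow_left₀ (asympRadius_nonneg hu) (asympRadius_le hu m) 2
    linarith
  have hδ : Tendsto (fun k => asympRadiusAt u (y k) ^ 2 - r ^ 2) atTop (𝓝 0) := by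
    rw [← sub_self (r ^ 2)]
    exact (hy.pow 2).sub_const _
  refine Metric.cauchySeq_iff'.2 fun ε hε => ?_
  have hε4 : 0 < ε ^ 2 / 4 := by positivity
  obtain ⟨N, hN⟩ := eventually_atTop.1 (hδ.eventually (gt_mem_nhds hε4))
  refine ⟨N, fun n hn => lt_of_pow_lt_pow_left₀ 2 hε.le ?_⟩
  linarith [hmid n N, hN n hn, hN N le_rfl]

lemma exists_asympCenter (hX : IsHadamard X) (hu : Bornology.IsBounded (Set.range u)) :
    ∃ c, AsympCenter u c := by
  have := hX.1
  have : Nonempty X := ⟨u 0⟩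
  obtain ⟨a, -, ha, hmem⟩ := exists_seq_tendsto_sInf (Set.range_nonempty (asympRadiusAt u))
    ⟨0, by rintro _ ⟨y, rfl⟩; exact asympRadiusAt_nonneg hu y⟩
  choose y hy using hmem
  have hyr : Tendsto (fun k => asympRadiusAt u (y k)) atTop (𝓝 (asympRadius u)) :=
    ha.congr fun k => (hy k).symm
  obtain ⟨c, hc⟩ := cauchySeq_tendsto_of_complete (cauchySeq_of_tendsto_asympRadius hX hu hyr)
  have hdist : Tendsto (fun k => dist c (y k) + asympRadiusAt u (y k)) atTop
      (𝓝 (0 + asympRadius u)) :=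
    ((tendsto_iff_dist_tendsto_zero.1 hc).congr fun k => dist_comm _ _).add hyr
  have hcr : asympRadiusAt u c ≤ asympRadius u := by
    simpa using ge_of_tendsto' hdist fun k => asympRadiusAt_le_dist_add hu c (y k)
  exact ⟨c, fun z => hcr.trans (asympRadius_le hu z)⟩

/-- A regular subsequence, one on all of whose subsequences the asymptotic radius is the same,
Δ-converges to its asymptotic center. -/
theorem exists_strictMono_deltaConv (hX : IsHadamard X)
    (hu : Bornology.IsBounded (Set.range u)) :
    ∃ φ : ℕ → ℕ, StrictMono φ ∧ ∃ c, DeltaConv (u ∘ φ) c := by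
  have hbdd : ∀ σ : ℕ → ℕ, Bornology.IsBounded (Set.range (u ∘ σ)) := fun σ =>
    hu.subset (Set.range_comp_subset_range σ u)
  obtain ⟨φ, hφ, hreg⟩ := exists_strictMono_forall_comp_eq (fun σ => asympRadius (u ∘ σ))
    ⟨0, by rintro _ ⟨σ, rfl⟩; exact asympRadius_nonneg (hbdd σ)⟩
    (fun σ _ hτ => asympRadius_comp_le (hbdd σ) hτ)
    (fun σ k => asympRadius_add_nat (u := u ∘ σ) k)
  obtain ⟨c, hc⟩ := exists_asympCenter hX (hbdd φ)
  refine ⟨φ, hφ, c, hbdd φ, fun π hπ y => ?_⟩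
  calc asympRadiusAt (u ∘ φ ∘ π) c ≤ asympRadiusAt (u ∘ φ) c :=
        asympRadiusAt_comp_le (hbdd φ) hπ c
    _ ≤ asympRadius (u ∘ φ) := hc.asympRadiusAt_le
    _ = asympRadius (u ∘ φ ∘ π) := (hreg π hπ).symm
    _ ≤ asympRadiusAt (u ∘ φ ∘ π) y := asympRadius_le (hbdd _) y

theorem exists_mem_deltaConv_of_tendsto_dist (hX : IsHadamard X)
    (hu : Bornology.IsBounded (Set.range u)) {F : Set X}
    (hF : ∀ q ∈ F, ∃ L, Tendsto (fun n => dist (u n) q) atTop (𝓝 L))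
    (hcl : ∀ φ z, StrictMono φ → DeltaConv (u ∘ φ) z → z ∈ F) :
    ∃ p ∈ F, DeltaConv u p := by
  have hbdd : ∀ σ : ℕ → ℕ, Bornology.IsBounded (Set.range (u ∘ σ)) := fun σ =>
    hu.subset (Set.range_comp_subset_range σ u)
  have hcenter : ∀ φ, StrictMono φ → ∃ c ∈ F, AsympCenter (u ∘ φ) c := by
    intro φ hφ
    obtain ⟨ψ, hψ, z, hz⟩ := exists_strictMono_deltaConv hX (hbdd φ)
    have hzF : z ∈ F := hcl (φ ∘ ψ) z (hφ.comp hψ) hz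
    obtain ⟨L, hL⟩ := hF z hzF
    refine ⟨z, hzF, fun y => ?_⟩
    calc asympRadiusAt (u ∘ φ) z = asympRadiusAt (u ∘ φ ∘ ψ) z :=
          (asympRadiusAt_comp_eq_of_tendsto hψ.tendsto_atTop (hL.comp hφ.tendsto_atTop)).symm
      _ ≤ asympRadiusAt (u ∘ φ ∘ ψ) y := hz.2 id strictMono_id y
      _ ≤ asympRadiusAt (u ∘ φ) y := asympRadiusAt_comp_le (hbdd φ) hψ y
  obtain ⟨p, hpF, hp⟩ := hcenter id strictMono_id
  refine ⟨p, hpF, hu, fun φ hφ y => ?_⟩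
  obtain ⟨c, hcF, hc⟩ := hcenter φ hφ
  obtain ⟨Lp, hLp⟩ := hF p hpF
  obtain ⟨Lc, hLc⟩ := hF c hcF
  calc asympRadiusAt (u ∘ φ) p = asympRadiusAt u p :=
        asympRadiusAt_comp_eq_of_tendsto hφ.tendsto_atTop hLp
    _ ≤ asympRadiusAt u c := hp c
    _ = asympRadiusAt (u ∘ φ) c := (asympRadiusAt_comp_eq_of_tendsto hφ.tendsto_atTop hLc).symm
    _ ≤ asympRadiusAt (u ∘ φ) y := hc y

end AsympRadius

section Orbit

variable {S : X → X}

lemma QuasiNonexpansive.antitone_dist_iterate (hS : QuasiNonexpansive S) (x : X) {q : X}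
    (hq : q ∈ FixSet S) : Antitone fun n => dist (S^[n] x) q :=
  antitone_nat_of_succ_le fun n => by
    rw [Function.iterate_succ_apply']
    exact hS.2 _ q hq

lemma QuasiNonexpansive.isBounded_orbit (hS : QuasiNonexpansive S) (x : X) :
    Bornology.IsBounded (Set.range fun n => S^[n] x) := by
  obtain ⟨q, hq⟩ := hS.1
  refine (isBounded_iff_subset_closedBall q).2 ⟨dist x q, ?_⟩
  rintro _ ⟨n, rfl⟩
  exact hS.antitone_dist_iterate x hq (Nat.zero_le n)

lemma QuasiNonexpansive.exists_tendsto_dist_iterate (hS : QuasiNonexpansive S) (x : X) {q : X}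
    (hq : q ∈ FixSet S) : ∃ L, Tendsto (fun n => dist (S^[n] x) q) atTop (𝓝 L) :=
  ⟨_, tendsto_atTop_ciInf (hS.antitone_dist_iterate x hq)
    ⟨0, by rintro _ ⟨n, rfl⟩; exact dist_nonneg⟩⟩

lemma StronglyQuasiNonexpansive.tendsto_dist_iterate_apply (hS : StronglyQuasiNonexpansive S)
    (x : X) : Tendsto (fun n => dist (S^[n] x) (S (S^[n] x))) atTop (𝓝 0) := by
  obtain ⟨q, hq⟩ := hS.1.1
  obtain ⟨L, hL⟩ := hS.1.exists_tendsto_dist_iterate x hq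
  refine hS.2 _ (hS.1.isBounded_orbit x) q hq ?_
  have hL' : Tendsto (fun n => dist (S (S^[n] x)) q) atTop (𝓝 L) :=
    (hL.comp (tendsto_add_atTop_nat 1)).congr fun n => by
      rw [Function.comp_apply, Function.iterate_succ_apply']
  simpa using hL.sub hL'

end Orbit

theorem stmt8_general {X : Type*} [MetricSpace X] (hX : IsHadamard X) (S : X → X)
    (hS : StronglyQuasiNonexpansive S) (hd : OrbitalDeltaDemiclosed S)
    (p₀ : X) :
    ∃ p : X, p ∈ FixSet S ∧ DeltaConv (fun n : ℕ => S^[n] p₀) p :=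
  exists_mem_deltaConv_of_tendsto_dist hX (hS.1.isBounded_orbit p₀)
    (fun _ hq => hS.1.exists_tendsto_dist_iterate p₀ hq)
    fun φ z hφ hz => hd _ z ⟨p₀, φ, hφ, fun _ => rfl⟩ hz
      ((hS.tendsto_dist_iterate_apply p₀).comp hφ.tendsto_atTop)

theorem stmt8 {X : Type*} [MetricSpace X] (hX : IsHadamard X) (S : X → X)
    (hS : StronglyQuasiNonexpansive S) (hd : OrbitalDeltaDemiclosed S)
    (hfix : (FixSet S).Nonempty) (p₀ : X) :
    ∃ p : X, p ∈ FixSet S ∧ DeltaConv (fun n : ℕ => S^[n] p₀) p :=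
  stmt8_general hX S hS hd p₀
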